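/- ∑_{n=1}^∞ |√5 − L_n/F_n| = 2 · ∑_{n=1}^∞ 1/(F_n · Φ^n) = 2 · ∑_{n=1}^∞ 1/(F_{2n} · F_{2n-1}). -/

import Mathlib

open Filter Finset Topology

/-- The golden ratio `Φ = (1 + √5)/2`. -/
noncomputable def Phi : ℝ := (1 + Real.sqrt 5) / 2

/-- The Lucas sequence: `L_0 = 2`, `L_1 = 1`, `L_{n+2} = L_n + L_{n+1}`. -/
def lucas : ℕ → ℕ
  | 0 => 2
  | 1 => 1
  | n + 2 => lucas n + lucas (n + 1)

/-!
Binet's formulas `√5 F_n = φⁿ - ψⁿ` and `L_n = φⁿ + ψⁿ` give `√5 F_n - L_n = -2ψⁿ`, and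
`|ψ| = φ⁻¹`, so `|√5 - L_n/F_n| = 2/(F_n φⁿ)`. Grouping consecutive terms, the identity
`φⁿ⁺¹ = F_{n+1} φ + F_n` turns `1/(F_n φⁿ) + 1/(F_{n+1} φⁿ⁺¹)` into `1/(F_n F_{n+1})`.
-/

open Real goldenRatio

theorem Summable.tsum_eq_tsum_two_mul_add_two_mul_add_one {α : Type*} [AddCommGroup α]
    [UniformSpace α] [IsUniformAddGroup α] [CompleteSpace α] [T2Space α] {f : ℕ → α}
    (hf : Summable f) : ∑' n, f n = ∑' k, (f (2 * k) + f (2 * k + 1)) := by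
  have heven : Summable fun k => f (2 * k) := hf.comp_injective fun _ _ h => by omega
  have hodd : Summable fun k => f (2 * k + 1) := hf.comp_injective fun _ _ h => by omega
  rw [heven.tsum_add hodd, tsum_even_add_odd heven hodd]

theorem Phi_eq_goldenRatio : Phi = φ := rfl

theorem lucas_add_two (n : ℕ) : lucas (n + 2) = lucas n + lucas (n + 1) := rfl

theorem coe_lucas_eq (n : ℕ) : (lucas n : ℝ) = φ ^ n + ψ ^ n := by
  induction n using Nat.twoStepInduction with
  | zero => norm_num [lucas]
  | one => simp [lucas]
  | more n ih₀ ih₁ =>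
    rw [lucas_add_two, Nat.cast_add, ih₀, ih₁]
    linear_combination (-φ ^ n) * goldenRatio_sq + (-ψ ^ n) * goldenConj_sq

theorem sqrt_five_mul_fib_sub_lucas (n : ℕ) : √5 * Nat.fib n - lucas n = -2 * ψ ^ n := by
  have hsqrt5 : √5 ≠ 0 := by positivity
  rw [coe_fib_eq, coe_lucas_eq, mul_div_cancel₀ _ hsqrt5]
  ring

theorem abs_goldenConj : |ψ| = φ⁻¹ := by
  rw [inv_goldenRatio, abs_of_neg goldenConj_neg]

theorem abs_sqrt_five_sub_lucas_div_fib (n : ℕ) :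
    |√5 - lucas (n + 1) / Nat.fib (n + 1)| = 2 / (Nat.fib (n + 1) * φ ^ (n + 1)) := by
  have hfib : (0 : ℝ) < Nat.fib (n + 1) := by exact_mod_cast Nat.fib_pos.2 n.succ_pos
  rw [← mul_div_cancel_left₀ √5 hfib.ne', ← sub_div, mul_comm, sqrt_five_mul_fib_sub_lucas,
    abs_div, abs_of_pos hfib, abs_mul, abs_pow, abs_goldenConj, inv_pow]
  field_simp
  norm_num

theorem one_div_fib_mul_goldenRatio_pow_add_succ (n : ℕ) :
    1 / (Nat.fib (n + 1) * φ ^ (n + 1)) + 1 / (Nat.fib (n + 2) * φ ^ (n + 2)) =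
      1 / (Nat.fib (n + 2) * Nat.fib (n + 1)) := by
  have hfib₁ : (0 : ℝ) < Nat.fib (n + 1) := by exact_mod_cast Nat.fib_pos.2 n.succ_pos
  have hfib₂ : (0 : ℝ) < Nat.fib (n + 2) := by exact_mod_cast Nat.fib_pos.2 (n + 1).succ_pos
  have hpow := goldenRatio_mul_fib_succ_add_fib (n + 1)
  field_simp
  linear_combination φ ^ (n + 1) * hpow

theorem summable_one_div_fib_mul_goldenRatio_pow :
    Summable fun n => 1 / ((Nat.fib (n + 1) : ℝ) * φ ^ (n + 1)) := by
  have hgeom : Summable fun n => φ⁻¹ ^ (n + 1) :=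
    (summable_nat_add_iff 1).2 <| summable_geometric_of_lt_one (inv_nonneg.2 goldenRatio_pos.le)
      (inv_lt_one_of_one_lt₀ one_lt_goldenRatio)
  refine hgeom.of_nonneg_of_le (fun n => by positivity) fun n => ?_
  rw [inv_pow, ← one_div]
  gcongr
  exact le_mul_of_one_le_left (by positivity) (by exact_mod_cast Nat.fib_pos.2 n.succ_pos)

/-- `∑_{n=1}^∞ |√5 - L_n/F_n| = 2 ∑_{n=1}^∞ 1/(F_n Φ^n) = 2 ∑_{n=1}^∞ 1/(F_{2n} F_{2n-1})`. -/
theorem statement17 :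
    (∑' n : ℕ, |Real.sqrt 5 - (lucas (n + 1) : ℝ) / (Nat.fib (n + 1) : ℝ)| =
      2 * ∑' n : ℕ, 1 / ((Nat.fib (n + 1) : ℝ) * Phi ^ (n + 1))) ∧
    (2 * ∑' n : ℕ, 1 / ((Nat.fib (n + 1) : ℝ) * Phi ^ (n + 1)) =
      2 * ∑' n : ℕ, 1 / ((Nat.fib (2 * n + 2) : ℝ) * (Nat.fib (2 * n + 1) : ℝ))) := by
  rw [Phi_eq_goldenRatio]
  constructor
  · rw [← tsum_mul_left]
    exact tsum_congr fun n => by rw [abs_sqrt_five_sub_lucas_div_fib, mul_one_div]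
  · rw [summable_one_div_fib_mul_goldenRatio_pow.tsum_eq_tsum_two_mul_add_two_mul_add_one]
    exact congrArg _ <| tsum_congr fun k => one_div_fib_mul_goldenRatio_pow_add_succ (2 * k)
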